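/- Let x* ∈ ℝ^N be nonzero and let x ∈ ℝ^N satisfy: ‖x‖₂ > (1/2)‖x*‖₂; min{‖x − x*‖₂, ‖x + x*‖₂} > (1/10)‖x*‖₂; and for every unit vector w ∈ ℝ^N with wᵀx* = 0 and every γ ∈ {1,−1}, ‖x − γ(1/√3)‖x*‖₂ w‖₂ > (1/5)‖x*‖₂. Then ‖∇g(x)‖₂ = ‖6‖x‖₂² x − 2‖x*‖₂² x − 4(x*ᵀx)x*‖₂ > 0.3963‖x*‖₂³. -/

import Mathlib

open scoped RealInnerProductSpace

/-- The gradient of the phase-retrieval population risk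
`g(x) = ‖xxᵀ − x*x*ᵀ‖_F² + (1/2)(‖x‖² − ‖x*‖²)²`, namely
`∇g(x) = 6‖x‖²x − 2‖x*‖²x − 4(x*ᵀx)x*`. -/
noncomputable def gradPR {N : ℕ} (xs x : EuclideanSpace ℝ (Fin N)) :
    EuclideanSpace ℝ (Fin N) :=
  (6 * ‖x‖ ^ 2 - 2 * ‖xs‖ ^ 2) • x - (4 * ⟪xs, x⟫) • xs

/-- The smallest eigenvalue of the Hessian
`∇²g(x) = 12xxᵀ − 4x*x*ᵀ + (6‖x‖² − 2‖x*‖²)I` of the phase-retrieval population risk,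
given as the infimum of the Rayleigh quotient over the unit sphere. -/
noncomputable def lamMinHess {N : ℕ} (xs x : EuclideanSpace ℝ (Fin N)) : ℝ :=
  sInf {t : ℝ | ∃ v : EuclideanSpace ℝ (Fin N), ‖v‖ = 1 ∧
    t = 12 * ⟪x, v⟫ ^ 2 - 4 * ⟪xs, v⟫ ^ 2 + 6 * ‖x‖ ^ 2 - 2 * ‖xs‖ ^ 2}

/-!
Write `x = c • x* + p` with `p ⊥ x*` and `‖p‖ = ρ ‖x*‖`. Then
`‖∇g(x)‖² = ‖x*‖⁶ F(|c|, ρ)` with `F(u, ρ) = 36u²(u² + ρ² - 1)² + (6(u² + ρ²) - 2)²ρ²`,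
and the three hypotheses become conditions on the point `(u, ρ) = (|c|, ρ)` of the plane:
`u² + ρ² > 1/4`, `(u - 1)² + ρ² > 1/100` and, testing the saddle direction `w = p / ‖p‖`,
`4ρ² < 3(u² + ρ² + 22/75)²`. On that region `F > 0.3963² = 15705369/10⁸` by a case split.
The constant is nearly attained on the circle of radius `1/10` about the minimizer `(1, 0)`;
there the bound comes from the certificate `F - 0.3963² = ((u - 1)² + ρ² - 1/100) P + Q` with `P, Q > 0`.
-/

def normalizedGradNormSq (u ρ : ℝ) : ℝ :=
  36 * u ^ 2 * (u ^ 2 + ρ ^ 2 - 1) ^ 2 + (6 * (u ^ 2 + ρ ^ 2) - 2) ^ 2 * ρ ^ 2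

section Scalar

variable {u ρ : ℝ}

theorem lt_normalizedGradNormSq_of_near_one (hu : 19 / 20 ≤ u)
    (hfar : 1 / 100 < (u - 1) ^ 2 + ρ ^ 2) :
    15705369 / 100000000 < normalizedGradNormSq u ρ := by
  obtain ⟨t, rfl⟩ : ∃ t, u = 1 + t := ⟨u - 1, by ring⟩
  have ht : -1 / 20 ≤ t := by linarith
  have hP : 0 < 42109/2500 + (2109/25)*ρ^2 + 36*ρ^4 + (6054/25)*t + 216*t*ρ^2
      + (11709/25)*t^2 + 72*t^2*ρ^2 + 216*t^3 + 36*t^4 := by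
    nlinarith [sq_nonneg t, sq_nonneg ρ, sq_nonneg (t*ρ), sq_nonneg (t^2),
      sq_nonneg (ρ^2), mul_nonneg (sq_nonneg t) (sq_nonneg ρ), sq_nonneg (t+1/2)]
  have hQ : 0 < 192*(t+1/20)*(t+469/50000)^2 + (370744/3125)*(t+7899897/842600000)^2
      + 652935015641/5984375000000000 := by
    have : 0 ≤ 192*(t+1/20)*(t+469/50000)^2 := mul_nonneg (by linarith) (sq_nonneg _)
    positivity
  have hslack : 0 < (1 + t - 1)^2 + ρ^2 - 1/100 := by linarith
  have key : normalizedGradNormSq (1 + t) ρ - 15705369/100000000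
      = ((1 + t - 1)^2 + ρ^2 - 1/100) * (42109/2500 + (2109/25)*ρ^2 + 36*ρ^4 + (6054/25)*t
        + 216*t*ρ^2 + (11709/25)*t^2 + 72*t^2*ρ^2 + 216*t^3 + 36*t^4)
      + (192*(t+1/20)*(t+469/50000)^2 + (370744/3125)*(t+7899897/842600000)^2
        + 652935015641/5984375000000000) := by
    simp only [normalizedGradNormSq]; ring
  nlinarith [mul_pos hslack hP]

theorem lt_normalizedGradNormSq_of_small_rho (hu0 : 0 ≤ u) (hu : u < 19 / 20)
    (hρ : ρ ^ 2 ≤ 144 / 10000) (hnorm : 1 / 4 < u ^ 2 + ρ ^ 2) :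
    15705369 / 100000000 < normalizedGradNormSq u ρ := by
  have hS : u ^ 2 + ρ ^ 2 ≤ 9169 / 10000 := by nlinarith
  unfold normalizedGradNormSq
  nlinarith [mul_nonneg (sq_nonneg (6 * (u ^ 2 + ρ ^ 2) - 2)) (sq_nonneg ρ),
    mul_nonneg (sub_nonneg.2 hS) (sq_nonneg (u ^ 2 + ρ ^ 2 - 1)), sq_nonneg (u ^ 2 + ρ ^ 2 - 1),
    mul_nonneg (mul_nonneg (sub_nonneg.2 hS) (sub_nonneg.2 hS)) (sq_nonneg (u ^ 2 + ρ ^ 2 - 1))]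

theorem lt_normalizedGradNormSq_of_half_le (hu : 1 / 2 ≤ u) (hρ : 144 / 10000 < ρ ^ 2) :
    15705369 / 100000000 < normalizedGradNormSq u ρ := by
  have hu2 : 1 / 4 ≤ u ^ 2 := by nlinarith
  unfold normalizedGradNormSq
  nlinarith [mul_nonneg (sub_nonneg.2 hu2) (sq_nonneg (u ^ 2 + ρ ^ 2 - 1)),
    mul_nonneg (sub_nonneg.2 hρ.le) (sq_nonneg (6 * (u ^ 2 + ρ ^ 2) - 2)),
    sq_nonneg (u ^ 2 + ρ ^ 2 - 83 / 100), sq_nonneg (u ^ 2 + ρ ^ 2 - 1)]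

theorem lt_normalizedGradNormSq_of_lt_half (hu0 : 0 ≤ u) (hu : u < 1 / 2)
    (hnorm : 1 / 4 < u ^ 2 + ρ ^ 2) (hsaddle : 4 * ρ ^ 2 < 3 * (u ^ 2 + ρ ^ 2 + 22 / 75) ^ 2) :
    15705369 / 100000000 < normalizedGradNormSq u ρ := by
  set S := u ^ 2 + ρ ^ 2 with hS
  have hρ : ρ ^ 2 = S - u ^ 2 := by rw [hS]; ring
  have hF : normalizedGradNormSq u ρ = (32 - 48 * S) * u ^ 2 + S * (6 * S - 2) ^ 2 := by
    rw [normalizedGradNormSq, hρ]; ring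
  have hu2 : u ^ 2 ≤ 1 / 4 := by nlinarith
  rw [hF]
  rcases le_or_gt S (2 / 3) with hS23 | hS23
  · have hcoef : 0 ≤ 32 - 48 * S := by linarith
    have hu2' : 4 * S - 3 * (S + 22 / 75) ^ 2 < 4 * u ^ 2 := by rw [hρ] at hsaddle; linarith
    nlinarith [mul_nonneg hcoef (sub_nonneg.2 hu2'.le),
      sq_nonneg (S - 4127 / 10000), sq_nonneg (S - 1 / 3),
      mul_nonneg (mul_nonneg hcoef hcoef) hcoef,
      mul_nonneg (sq_nonneg (S - 4127 / 10000)) (by linarith : (0:ℝ) ≤ 2 / 3 - S)]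
  · nlinarith [mul_nonneg (by linarith : (0:ℝ) ≤ 48 * S - 32) (sub_nonneg.2 hu2),
      sq_nonneg (S - 2 / 3),
      mul_nonneg (sq_nonneg (S - 2 / 3)) (by linarith : (0:ℝ) ≤ S - 2 / 3)]

theorem lt_normalizedGradNormSq (hu : 0 ≤ u) (hnorm : 1 / 4 < u ^ 2 + ρ ^ 2)
    (hfar : 1 / 100 < (u - 1) ^ 2 + ρ ^ 2)
    (hsaddle : 4 * ρ ^ 2 < 3 * (u ^ 2 + ρ ^ 2 + 22 / 75) ^ 2) :
    15705369 / 100000000 < normalizedGradNormSq u ρ := by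
  rcases le_or_gt (19 / 20) u with hu95 | hu95
  · exact lt_normalizedGradNormSq_of_near_one hu95 hfar
  rcases le_or_gt (ρ ^ 2) (144 / 10000) with hρ | hρ
  · exact lt_normalizedGradNormSq_of_small_rho hu hu95 hρ hnorm
  rcases le_or_gt (1 / 2) u with hu5 | hu5
  · exact lt_normalizedGradNormSq_of_half_le hu5 hρ
  · exact lt_normalizedGradNormSq_of_lt_half hu hu5 hnorm hsaddle

end Scalar

theorem sq_lt_of_mul_lt_of_sq_eq {k n Q a : ℝ} (hk : 0 ≤ k) (ha : 0 < a) (h : k * a < n)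
    (hn : n ^ 2 = Q * a ^ 2) : k ^ 2 < Q := by
  have : (k * a) ^ 2 < n ^ 2 := pow_lt_pow_left₀ h (by positivity) two_ne_zero
  rw [hn, mul_pow] at this
  exact lt_of_mul_lt_mul_right this (sq_nonneg a)

section Geometry

variable {E : Type*} [NormedAddCommGroup E] [InnerProductSpace ℝ E]

theorem norm_smul_add_smul_sq_of_inner_eq_zero {a p : E} (h : ⟪a, p⟫ = 0) (β γ : ℝ) :
    ‖β • a + γ • p‖ ^ 2 = β ^ 2 * ‖a‖ ^ 2 + γ ^ 2 * ‖p‖ ^ 2 := by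
  have h' : ⟪β • a, γ • p⟫ = 0 := by simp [real_inner_smul_left, real_inner_smul_right, h]
  rw [norm_add_sq_real, h', norm_smul, norm_smul, mul_pow, mul_pow, Real.norm_eq_abs,
    Real.norm_eq_abs, sq_abs, sq_abs]
  ring

theorem exists_eq_smul_add_of_inner_eq_zero (a x : E) :
    ∃ (c : ℝ) (p : E), x = c • a + p ∧ ⟪a, p⟫ = 0 := by
  refine ⟨⟪a, x⟫ / ‖a‖ ^ 2, x - (⟪a, x⟫ / ‖a‖ ^ 2) • a, by abel, ?_⟩
  rcases eq_or_ne a 0 with rfl | ha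
  · simp
  rw [inner_sub_right, real_inner_smul_right, real_inner_self_eq_norm_sq]
  field_simp
  ring

variable {a p : E} {ρ : ℝ}

theorem norm_smul_add_smul_sq_eq_mul (hp : ⟪a, p⟫ = 0) (hρ : ‖p‖ = ρ * ‖a‖) (β γ : ℝ) :
    ‖β • a + γ • p‖ ^ 2 = (β ^ 2 + γ ^ 2 * ρ ^ 2) * ‖a‖ ^ 2 := by
  rw [norm_smul_add_smul_sq_of_inner_eq_zero hp, hρ]; ring

theorem quarter_lt_of_far_from_origin {c : ℝ} (hp : ⟪a, p⟫ = 0) (hρ : ‖p‖ = ρ * ‖a‖)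
    (ha : 0 < ‖a‖) (h : (1 / 2) * ‖a‖ < ‖c • a + p‖) :
    1 / 4 < |c| ^ 2 + ρ ^ 2 := by
  have hx := norm_smul_add_smul_sq_eq_mul hp hρ c 1
  rw [one_smul, one_pow, one_mul] at hx
  rw [sq_abs]
  linarith [sq_lt_of_mul_lt_of_sq_eq (by norm_num) ha h hx]

theorem hundredth_lt_of_far_from_minimizers {c : ℝ} (hp : ⟪a, p⟫ = 0) (hρ : ‖p‖ = ρ * ‖a‖)
    (ha : 0 < ‖a‖) (h : (1 / 10) * ‖a‖ < min ‖c • a + p - a‖ ‖c • a + p + a‖) :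
    1 / 100 < (|c| - 1) ^ 2 + ρ ^ 2 := by
  rcases le_or_gt 0 c with hc | hc
  · have hx := norm_smul_add_smul_sq_eq_mul hp hρ (c - 1) 1
    rw [show (c - 1) • a + (1 : ℝ) • p = c • a + p - a by module] at hx
    rw [abs_of_nonneg hc]
    linarith [sq_lt_of_mul_lt_of_sq_eq (by norm_num) ha (lt_min_iff.mp h).1 hx]
  · have hx := norm_smul_add_smul_sq_eq_mul hp hρ (c + 1) 1
    rw [show (c + 1) • a + (1 : ℝ) • p = c • a + p + a by module] at hx
    rw [abs_of_neg hc, show (-c - 1) ^ 2 = (c + 1) ^ 2 by ring]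
    linarith [sq_lt_of_mul_lt_of_sq_eq (by norm_num) ha (lt_min_iff.mp h).2 hx]

theorem four_mul_sq_lt_of_far_from_saddles {c : ℝ} (hp : ⟪a, p⟫ = 0) (hρ : ‖p‖ = ρ * ‖a‖)
    (ha : 0 < ‖a‖) (h : ∀ w : E, ‖w‖ = 1 → ⟪w, a⟫ = 0 →
      (1 / 5) * ‖a‖ < ‖c • a + p - ((Real.sqrt 3)⁻¹ * ‖a‖) • w‖) :
    4 * ρ ^ 2 < 3 * (|c| ^ 2 + ρ ^ 2 + 22 / 75) ^ 2 := by
  rcases eq_or_ne p 0 with rfl | hp0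
  · have hρ0 : ρ = 0 := by simpa [ha.ne'] using hρ
    subst hρ0
    nlinarith [sq_nonneg c]
  have hρpos : 0 < ρ := pos_of_mul_pos_left (hρ ▸ norm_pos_iff.2 hp0) ha.le
  set q := (Real.sqrt 3)⁻¹
  have hq : q ^ 2 = 1 / 3 := by simp [q, inv_pow]
  have hw : ⟪‖p‖⁻¹ • p, a⟫ = 0 := by rw [real_inner_smul_left, real_inner_comm, hp, mul_zero]
  have hx := norm_smul_add_smul_sq_eq_mul hp hρ c (1 - q / ρ)
  rw [show c • a + (1 - q / ρ) • p = c • a + p - (q * ‖a‖) • (‖p‖⁻¹ • p) by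
    rw [hρ, smul_smul, show q * ‖a‖ * (ρ * ‖a‖)⁻¹ = q / ρ by field_simp]; module] at hx
  have h25 := sq_lt_of_mul_lt_of_sq_eq (by norm_num) ha (h _ (norm_smul_inv_norm hp0) hw) hx
  have hlin : 2 * q * ρ < |c| ^ 2 + ρ ^ 2 + 22 / 75 := by
    rw [sq_abs]; field_simp at h25; nlinarith
  have := pow_lt_pow_left₀ hlin (by positivity) two_ne_zero
  nlinarith

end Geometry

theorem sq_norm_gradPR_smul_add {N : ℕ} {a p : EuclideanSpace ℝ (Fin N)} {ρ : ℝ}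
    (hp : ⟪a, p⟫ = 0) (hρ : ‖p‖ = ρ * ‖a‖) (c : ℝ) :
    ‖gradPR a (c • a + p)‖ ^ 2 = normalizedGradNormSq |c| ρ * ‖a‖ ^ 6 := by
  have hx := norm_smul_add_smul_sq_eq_mul hp hρ c 1
  rw [one_smul, one_pow, one_mul] at hx
  have hin : ⟪a, c • a + p⟫ = c * ‖a‖ ^ 2 := by
    rw [inner_add_right, real_inner_smul_right, real_inner_self_eq_norm_sq, hp, add_zero]
  have hgrad : gradPR a (c • a + p) = ((6 * (c ^ 2 + ρ ^ 2) - 6) * c * ‖a‖ ^ 2) • a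
      + ((6 * (c ^ 2 + ρ ^ 2) - 2) * ‖a‖ ^ 2) • p := by
    rw [gradPR, hx, hin]; module
  rw [hgrad, norm_smul_add_smul_sq_of_inner_eq_zero hp, hρ, normalizedGradNormSq, sq_abs]
  ring

theorem stmt_18 {N : ℕ} (xs x : EuclideanSpace ℝ (Fin N)) (hxs : xs ≠ 0)
    (h1 : (1 / 2) * ‖xs‖ < ‖x‖)
    (h2 : (1 / 10) * ‖xs‖ < min ‖x - xs‖ ‖x + xs‖)
    (h3 : ∀ w : EuclideanSpace ℝ (Fin N), ‖w‖ = 1 → ⟪w, xs⟫ = 0 →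
      (1 / 5) * ‖xs‖ < ‖x - ((Real.sqrt 3)⁻¹ * ‖xs‖) • w‖ ∧
      (1 / 5) * ‖xs‖ < ‖x + ((Real.sqrt 3)⁻¹ * ‖xs‖) • w‖) :
    0.3963 * ‖xs‖ ^ 3 < ‖gradPR xs x‖ := by
  obtain ⟨c, p, rfl, hp⟩ := exists_eq_smul_add_of_inner_eq_zero xs x
  have ha : 0 < ‖xs‖ := norm_pos_iff.2 hxs
  obtain ⟨ρ, hρ⟩ : ∃ ρ, ‖p‖ = ρ * ‖xs‖ := ⟨‖p‖ / ‖xs‖, by field_simp⟩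
  have hF := lt_normalizedGradNormSq (abs_nonneg c)
    (quarter_lt_of_far_from_origin hp hρ ha h1)
    (hundredth_lt_of_far_from_minimizers hp hρ ha h2)
    (four_mul_sq_lt_of_far_from_saddles hp hρ ha fun w hw hwa ↦ (h3 w hw hwa).1)
  refine lt_of_pow_lt_pow_left₀ 2 (norm_nonneg _) ?_
  rw [sq_norm_gradPR_smul_add hp hρ c,
    show (0.3963 * ‖xs‖ ^ 3) ^ 2 = 15705369 / 100000000 * ‖xs‖ ^ 6 by norm_num; ring]
  exact mul_lt_mul_of_pos_right hF (by positivity)
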